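/- arXiv:2508.10813 — 8 statements merged into one kernel-verified Lean document; each statement's English description precedes it below -/
import Mathlib

section
/- In any Euclidean frame (W,R), the dust, root, and kernel form a partition of W, where dust(W,R) = {w : R(w) = ∅}, root(W,R) = {w : R(w) ≠ ∅ and R⁻¹(w) = ∅}, and kernel(W,R) = {w : R⁻¹(w) ≠ ∅}. -/
/-- In any Euclidean frame (W,R), the dust, root and kernel
are pairwise disjoint and their union is W. -/
theorem stmt4 {W : Type*} [Nonempty W] (R : W → W → Prop)
    (heucl : ∀ s t u : W, R s t → R s u → R t u ∧ R u t) :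
    Disjoint {w : W | ∀ v, ¬ R w v} {w : W | (∃ v, R w v) ∧ ∀ v, ¬ R v w} ∧
    Disjoint {w : W | ∀ v, ¬ R w v} {w : W | ∃ v, R v w} ∧
    Disjoint {w : W | (∃ v, R w v) ∧ ∀ v, ¬ R v w} {w : W | ∃ v, R v w} ∧
    {w : W | ∀ v, ¬ R w v} ∪ {w : W | (∃ v, R w v) ∧ ∀ v, ¬ R v w} ∪ {w : W | ∃ v, R v w}
      = Set.univ := by
  refine ⟨?_, ?_, ?_, ?_⟩
  · rw [Set.disjoint_left]
    rintro w hw ⟨⟨v, hv⟩, -⟩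
    exact hw v hv
  · rw [Set.disjoint_left]
    rintro w hw ⟨v, hv⟩
    exact hw w (heucl v w w hv hv).1
  · rw [Set.disjoint_left]
    rintro w ⟨-, hw⟩ ⟨v, hv⟩
    exact hw v hv
  · ext w
    simp only [Set.mem_union, Set.mem_setOf_eq, Set.mem_univ, iff_true]
    by_cases h : ∃ v, R w v
    · by_cases h2 : ∃ v, R v w
      · exact Or.inr h2
      · exact Or.inl (Or.inr ⟨h, fun v hv => h2 ⟨v, hv⟩⟩)
    · exact Or.inl (Or.inl (fun v hv => h ⟨v, hv⟩))
end

section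
/- In a Euclidean frame (W,R), for every s ∈ W, the subframe (W_s, R_s) generated by s satisfies: either R_s = W_s × W_s, or there exist sets B ⊆ C with s ∉ C, B ≠ ∅ or C = ∅, such that W_s = {s} ∪ C and R_s = ({s} × B) ∪ (C × C). -/
/-- In a Euclidean frame, for every s the generated subframe (W_s,R_s)
satisfies: either R_s = W_s × W_s, or W_s = {s} ∪ C and
R_s = ({s} × B) ∪ (C × C) for some B ⊆ C with s ∉ C and (B ≠ ∅ or C = ∅). -/
theorem stmt5 {W : Type*} [Nonempty W] (R : W → W → Prop)
    (heucl : ∀ s t u : W, R s t → R s u → R t u ∧ R u t) (s : W) :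
    (∀ x ∈ {t | Relation.ReflTransGen R s t}, ∀ y ∈ {t | Relation.ReflTransGen R s t}, R x y) ∨
    ∃ B C : Set W, B ⊆ C ∧ s ∉ C ∧ (B.Nonempty ∨ C = ∅) ∧
      {t | Relation.ReflTransGen R s t} = insert s C ∧
      (∀ x ∈ {t | Relation.ReflTransGen R s t}, ∀ y ∈ {t | Relation.ReflTransGen R s t},
        (R x y ↔ (x = s ∧ y ∈ B) ∨ (x ∈ C ∧ y ∈ C))) := by
  by_cases hss : R s s
  · left
    have key : ∀ t, Relation.ReflTransGen R s t → R s t := by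
      intro t h
      induction h with
      | refl => exact hss
      | tail h' hr ih =>
        have h1 := heucl s _ s ih hss
        exact (heucl _ _ s hr h1.1).2
    intro x hx y hy
    exact (heucl s x y (key x hx) (key y hy)).1
  · right
    have main : ∀ t, Relation.ReflTransGen R s t →
        t = s ∨ ((∃ b, R s b) ∧ ∀ b, R s b → R t b ∧ R b t) := by
      intro t h
      induction h with
      | refl => exact Or.inl rfl
      | tail h' hr ih =>
        rcases ih with heq | ⟨⟨b0, hb0⟩, hP⟩
        · rw [heq] at hr
          exact Or.inr ⟨⟨_, hr⟩, fun b hb => heucl s _ b hr hb⟩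
        · refine Or.inr ⟨⟨b0, hb0⟩, fun b hb => ?_⟩
          have := heucl _ b _ (hP b hb).1 hr
          exact ⟨this.2, this.1⟩
    refine ⟨{t | R s t}, {t | Relation.ReflTransGen R s t ∧ t ≠ s}, ?_, ?_, ?_, ?_, ?_⟩
    · intro b hb
      exact ⟨Relation.ReflTransGen.single hb, fun h => hss (h ▸ hb)⟩
    · exact fun h => h.2 rfl
    · by_cases hC : {t | Relation.ReflTransGen R s t ∧ t ≠ s} = (∅ : Set W)
      · exact Or.inr hC
      · left
        obtain ⟨t, ht⟩ := Set.nonempty_iff_ne_empty.2 hC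
        rcases main t ht.1 with rfl | ⟨⟨b0, hb0⟩, _⟩
        · exact absurd rfl ht.2
        · exact ⟨b0, hb0⟩
    · ext t
      constructor
      · intro ht
        by_cases h : t = s
        · exact h ▸ Set.mem_insert _ _
        · exact Set.mem_insert_iff.2 (Or.inr ⟨ht, h⟩)
      · rintro (rfl | ⟨h, _⟩)
        · exact Relation.ReflTransGen.refl
        · exact h
    · intro x hx y hy
      constructor
      · intro hxy
        by_cases hxs : x = s
        · exact Or.inl ⟨hxs, hxs ▸ hxy⟩
        · rcases main x hx with rfl | ⟨⟨b0, hb0⟩, hPx⟩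
          · exact absurd rfl hxs
          · refine Or.inr ⟨⟨hx, hxs⟩, hy, fun hys => ?_⟩
            have h1 := heucl x b0 s (hPx b0 hb0).1 (hys ▸ hxy)
            exact hss (heucl b0 s s h1.1 h1.1).1
      · rintro (⟨rfl, hyB⟩ | ⟨hxC, hyC⟩)
        · exact hyB
        · rcases main x hxC.1 with rfl | ⟨⟨b0, hb0⟩, hPx⟩
          · exact absurd rfl hxC.2
          · rcases main y hyC.1 with rfl | ⟨_, hPy⟩
            · exact absurd rfl hyC.2
            · exact (heucl b0 x y (hPx b0 hb0).2 (hPy b0 hb0).2).1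
end

section
/- For flowers F_m^n and F_{m'}^{n'}, F_m^n is a bounded morphic image of F_{m'}^{n'} if and only if m ≤ m' and n ≤ n'. -/
/-- `f` is a bounded morphism from the frame `(W',R')` to the frame `(W,R)`. -/
def IsBoundedMorphism {α β : Type*} (W' : Set α) (R' : α → α → Prop)
    (W : Set β) (R : β → β → Prop) (f : α → β) : Prop :=
  (∀ x ∈ W', f x ∈ W) ∧
  (∀ x ∈ W', ∀ y ∈ W', R' x y → R (f x) (f y)) ∧
  (∀ x ∈ W', ∀ t ∈ W, R (f x) t → ∃ y ∈ W', R' x y ∧ f y = t)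

/-- `(W,R)` is a bounded morphic image of `(W',R')`. -/
def IsBMImage {α β : Type*} (W : Set β) (R : β → β → Prop)
    (W' : Set α) (R' : α → α → Prop) : Prop :=
  ∃ f : α → β, IsBoundedMorphism W' R' W R f ∧ f '' W' = W

/-- Worlds of the flower F_m^n (m ≥ 1, n ≥ -1). -/
def flowerW (m n : ℤ) : Set ℤ :=
  if n = -1 then {i | 1 ≤ i ∧ i ≤ m} else {i | 0 ≤ i ∧ i ≤ m + n}

/-- Accessibility relation of the flower F_m^n. -/
def flowerR (m n : ℤ) (i j : ℤ) : Prop :=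
  if n = -1 then 1 ≤ i ∧ i ≤ m ∧ 1 ≤ j ∧ j ≤ m
  else (i = 0 ∧ 1 ≤ j ∧ j ≤ m) ∨ (1 ≤ i ∧ i ≤ m + n ∧ 1 ≤ j ∧ j ≤ m + n)

lemma card_int_interval (a b : ℤ) : ({i : ℤ | a ≤ i ∧ i ≤ b} : Set ℤ).ncard = (b + 1 - a).toNat := by
  have h : ({i : ℤ | a ≤ i ∧ i ≤ b} : Set ℤ) = Set.Icc a b := by
    ext i; simp [Set.mem_Icc]
  rw [h, Set.ncard_eq_toFinset_card', Set.toFinset_Icc, Int.card_Icc]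

lemma sub_image_card {f : ℤ → ℤ} {a b c d : ℤ}
    (h : ({i : ℤ | a ≤ i ∧ i ≤ b} : Set ℤ) ⊆ f '' {i : ℤ | c ≤ i ∧ i ≤ d}) :
    (b + 1 - a).toNat ≤ (d + 1 - c).toNat := by
  rw [← card_int_interval, ← card_int_interval]
  have hfin : ({i : ℤ | c ≤ i ∧ i ≤ d} : Set ℤ).Finite := by
    have : ({i : ℤ | c ≤ i ∧ i ≤ d} : Set ℤ) = Set.Icc c d := by ext i; simp [Set.mem_Icc]
    rw [this]; exact Set.finite_Icc c d
  calc ({i : ℤ | a ≤ i ∧ i ≤ b} : Set ℤ).ncard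
      ≤ (f '' {i : ℤ | c ≤ i ∧ i ≤ d}).ncard := Set.ncard_le_ncard h (hfin.image f)
    _ ≤ ({i : ℤ | c ≤ i ∧ i ≤ d} : Set ℤ).ncard := Set.ncard_image_le hfin

theorem fwd (m n m' n' : ℤ) (hm : 1 ≤ m) (hn : -1 ≤ n) (hm' : 1 ≤ m') (hn' : -1 ≤ n')
    (f : ℤ → ℤ)
    (hW : ∀ x ∈ flowerW m' n', f x ∈ flowerW m n)
    (hforth : ∀ x ∈ flowerW m' n', ∀ y ∈ flowerW m' n',
      flowerR m' n' x y → flowerR m n (f x) (f y))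
    (hback : ∀ x ∈ flowerW m' n', ∀ t ∈ flowerW m n,
      flowerR m n (f x) t → ∃ y ∈ flowerW m' n', flowerR m' n' x y ∧ f y = t)
    (himg : f '' flowerW m' n' = flowerW m n) :
    m ≤ m' ∧ n ≤ n' := by
  rcases hn.eq_or_lt with hn1 | hn0
  · -- n = -1
    subst hn1
    rcases hn'.eq_or_lt with hn1' | hn0'
    · -- n' = -1
      subst hn1'
      norm_num [flowerW] at himg
      have := sub_image_card himg.superset
      exact ⟨by omega, le_refl _⟩
    · -- n' ≥ 0
      have hne' : n' ≠ -1 := by omega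
      refine ⟨?_, by omega⟩
      have h0W' : (0:ℤ) ∈ flowerW m' n' := by simp [flowerW, hne']; omega
      have h0 := hW 0 h0W'
      simp only [flowerW, if_pos rfl, Set.mem_setOf_eq] at h0
      have hsub : {i : ℤ | 1 ≤ i ∧ i ≤ m} ⊆ f '' {i : ℤ | 1 ≤ i ∧ i ≤ m'} := by
        intro t ht
        simp only [Set.mem_setOf_eq] at ht
        have hRt : flowerR m (-1) (f 0) t := by
          simp only [flowerR, if_pos rfl]; exact ⟨h0.1, h0.2, ht.1, ht.2⟩
        obtain ⟨y, hy, hR'y, hfy⟩ := hback 0 h0W' t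
          (by simp only [flowerW, if_pos rfl, Set.mem_setOf_eq]; exact ht) hRt
        simp only [flowerR, hne', if_false] at hR'y
        exact ⟨y, by simp only [Set.mem_setOf_eq]; omega, hfy⟩
      have := sub_image_card hsub; omega
  · -- n ≥ 0
    have hne : n ≠ -1 := by omega
    have hR00 : ¬ flowerR m n 0 0 := by simp only [flowerR, hne, if_false]; omega
    have hne' : n' ≠ -1 := by
      intro h; subst h
      have h0W : (0:ℤ) ∈ flowerW m n := by simp [flowerW, hne]; omega
      rw [← himg] at h0W
      obtain ⟨x, hx, hfx⟩ := h0W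
      have hx2 := hx
      simp only [flowerW, if_pos rfl, Set.mem_setOf_eq] at hx2
      have := hforth x hx x hx (by simp only [flowerR, if_pos rfl]; exact ⟨hx2.1, hx2.2, hx2.1, hx2.2⟩)
      rw [hfx] at this
      exact hR00 this
    have h0W' : (0:ℤ) ∈ flowerW m' n' := by simp [flowerW, hne']; omega
    have f0 : f 0 = 0 := by
      have h0W : (0:ℤ) ∈ flowerW m n := by simp [flowerW, hne]; omega
      rw [← himg] at h0W
      obtain ⟨x, hx, hfx⟩ := h0W
      have hx2 := hx
      simp only [flowerW, hne', if_false, Set.mem_setOf_eq] at hx2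
      rcases eq_or_lt_of_le hx2.1 with h | h
      · rw [← h] at hfx; exact hfx
      · exfalso
        have := hforth x hx x hx (by
          simp only [flowerR, hne', if_false]
          right; exact ⟨by omega, hx2.2, by omega, hx2.2⟩)
        rw [hfx] at this
        exact hR00 this
    constructor
    · -- m ≤ m'
      have hsub : {i : ℤ | 1 ≤ i ∧ i ≤ m} ⊆ f '' {i : ℤ | 1 ≤ i ∧ i ≤ m'} := by
        intro t ht
        simp only [Set.mem_setOf_eq] at ht
        have hRt : flowerR m n (f 0) t := by
          simp only [flowerR, hne, if_false]; left; exact ⟨f0, ht.1, ht.2⟩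
        obtain ⟨y, hy, hR'y, hfy⟩ := hback 0 h0W' t
          (by simp only [flowerW, hne, if_false, Set.mem_setOf_eq]; omega) hRt
        simp only [flowerR, hne', if_false] at hR'y
        exact ⟨y, by simp only [Set.mem_setOf_eq]; omega, hfy⟩
      have := sub_image_card hsub; omega
    · -- n ≤ n'
      have hsub : {i : ℤ | m + 1 ≤ i ∧ i ≤ m + n} ⊆ f '' {i : ℤ | m' + 1 ≤ i ∧ i ≤ m' + n'} := by
        intro t ht
        simp only [Set.mem_setOf_eq] at ht
        have htW : t ∈ flowerW m n := by simp [flowerW, hne]; omega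
        rw [← himg] at htW
        obtain ⟨x, hx, hfx⟩ := htW
        have hx2 := hx
        simp only [flowerW, hne', if_false, Set.mem_setOf_eq] at hx2
        refine ⟨x, ?_, hfx⟩
        simp only [Set.mem_setOf_eq]
        constructor
        · by_contra hc
          push_neg at hc
          rcases eq_or_lt_of_le hx2.1 with h | h
          · rw [← h, f0] at hfx; omega
          · have := hforth 0 h0W' x hx (by
              simp only [flowerR, hne', if_false]; left; exact ⟨by trivial, by omega, by omega⟩)
            rw [f0, hfx] at this
            simp only [flowerR, hne, if_false] at this
            omega
        · exact hx2.2
      have := sub_image_card hsub; omega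

theorem bwd (m n m' n' : ℤ) (hm : 1 ≤ m) (hn : -1 ≤ n) (hm' : 1 ≤ m') (hn' : -1 ≤ n')
    (hmm : m ≤ m') (hnn : n ≤ n') :
    ∃ f : ℤ → ℤ,
      ((∀ x ∈ flowerW m' n', f x ∈ flowerW m n) ∧
       (∀ x ∈ flowerW m' n', ∀ y ∈ flowerW m' n',
          flowerR m' n' x y → flowerR m n (f x) (f y)) ∧
       (∀ x ∈ flowerW m' n', ∀ t ∈ flowerW m n,
          flowerR m n (f x) t → ∃ y ∈ flowerW m' n', flowerR m' n' x y ∧ f y = t)) ∧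
      f '' flowerW m' n' = flowerW m n := by
  rcases hn.eq_or_lt with hn1 | hn0
  · -- n = -1
    subst hn1
    rcases hn'.eq_or_lt with hn1' | hn0'
    · -- n' = -1
      subst hn1'
      refine ⟨fun i => min i m, ⟨?_, ?_, ?_⟩, ?_⟩
      · intro x hx
        simp only [flowerW, if_true, if_pos rfl, Set.mem_setOf_eq] at *
        omega
      · intro x hx y hy hR
        simp only [flowerW, flowerR, if_true, if_pos rfl, Set.mem_setOf_eq] at *
        omega
      · intro x hx t ht hR
        simp only [flowerW, flowerR, if_true, if_pos rfl, Set.mem_setOf_eq] at *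
        exact ⟨t, by omega, by omega, by omega⟩
      · ext t
        simp only [flowerW, if_true, if_pos rfl, Set.mem_image, Set.mem_setOf_eq]
        constructor
        · rintro ⟨x, hx, rfl⟩; omega
        · intro ht; exact ⟨t, by omega, by omega⟩
    · -- n' ≥ 0
      have hne' : n' ≠ -1 := by omega
      refine ⟨fun i => if i ≤ 0 then 1 else min i m, ⟨?_, ?_, ?_⟩, ?_⟩
      · intro x hx
        simp only [flowerW, if_true, if_pos rfl, hne', if_false, Set.mem_setOf_eq] at *
        split_ifs <;> omega
      · intro x hx y hy hR
        simp only [flowerW, flowerR, if_true, if_pos rfl, hne', if_false, Set.mem_setOf_eq] at *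
        split_ifs <;> omega
      · intro x hx t ht hR
        simp only [flowerW, flowerR, if_true, if_pos rfl, hne', if_false, Set.mem_setOf_eq] at *
        refine ⟨t, by omega, by omega, ?_⟩
        beta_reduce
        split_ifs <;> omega
      · ext t
        simp only [flowerW, if_true, if_pos rfl, hne', if_false, Set.mem_image, Set.mem_setOf_eq]
        constructor
        · rintro ⟨x, hx, rfl⟩; split_ifs <;> omega
        · intro ht
          refine ⟨t, by omega, ?_⟩
          split_ifs <;> omega
  · -- n ≥ 0, hence n' ≥ 0
    have hne : n ≠ -1 := by omega
    have hne' : n' ≠ -1 := by omega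
    refine ⟨fun i => if i ≤ 0 then 0 else if i ≤ m' then min i m else min (i - m' + m) (m + n),
      ⟨?_, ?_, ?_⟩, ?_⟩
    · intro x hx
      simp only [flowerW, hne, hne', if_false, Set.mem_setOf_eq] at *
      split_ifs <;> omega
    · intro x hx y hy hR
      simp only [flowerW, flowerR, hne, hne', if_false, Set.mem_setOf_eq] at *
      split_ifs <;> omega
    · intro x hx t ht hR
      simp only [flowerW, flowerR, hne, hne', if_false, Set.mem_setOf_eq] at *
      refine ⟨if t ≤ m then t else t - m + m', ?_, ?_, ?_⟩
      · split_ifs <;> omega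
      · split_ifs at hR ⊢ <;> omega
      · beta_reduce
        split_ifs at hR ⊢ <;> omega
    · ext t
      simp only [flowerW, hne, hne', if_false, Set.mem_image, Set.mem_setOf_eq]
      constructor
      · rintro ⟨x, hx, rfl⟩; split_ifs <;> omega
      · intro ht
        refine ⟨if t ≤ m then t else t - m + m', ?_, ?_⟩
        · split_ifs <;> omega
        · split_ifs <;> omega

/-- F_m^n is a bounded morphic image of F_{m'}^{n'} iff m ≤ m' and n ≤ n'. -/
theorem stmt6 (m n m' n' : ℤ) (hm : 1 ≤ m) (hn : -1 ≤ n) (hm' : 1 ≤ m') (hn' : -1 ≤ n') :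
    IsBMImage (flowerW m n) (flowerR m n) (flowerW m' n') (flowerR m' n') ↔
      (m ≤ m' ∧ n ≤ n') := by
  constructor
  · rintro ⟨f, ⟨hW, hforth, hback⟩, himg⟩
    exact fwd m n m' n' hm hn hm' hn' f hW hforth hback himg
  · rintro ⟨hmm, hnn⟩
    obtain ⟨f, h1, h2⟩ := bwd m n m' n' hm hn hm' hn' hmm hnn
    exact ⟨f, h1, h2⟩
end

section
/- Let k ≥ 4 be an integer, and let B ⊆ C be sets with |C| > k, |B| > 1, |C \ B| > 1. Let m = min(|B|, k) and n = min(|C \ B|, k). Let s be an element not in C, W = {s} ∪ C, and R = ({s} × B) ∪ (C × C). Then the flower F_m^n is a bounded morphic image of (W,R). -/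
/-- with k ≥ 4, B ⊆ C, |C| > k, |B| > 1, |C \ B| > 1, m = min(|B|,k),
n = min(|C\B|,k), s ∉ C, W = {s} ∪ C and R = ({s} × B) ∪ (C × C),
the flower F_m^n is a bounded morphic image of (W,R). -/
theorem stmt7 {α : Type*} (k : ℕ) (hk : 4 ≤ k) (B C : Set α) (hBC : B ⊆ C)
    (hC : (k : Cardinal) < Cardinal.mk C) (hB : 1 < Cardinal.mk B)
    (hCB : 1 < Cardinal.mk ↥(C \ B)) (m n : ℕ)
    (hm : (m : Cardinal) = min (Cardinal.mk B) (k : Cardinal))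
    (hn : (n : Cardinal) = min (Cardinal.mk ↥(C \ B)) (k : Cardinal))
    (s : α) (hs : s ∉ C) :
    IsBMImage (flowerW (m : ℤ) (n : ℤ)) (flowerR (m : ℤ) (n : ℤ)) (insert s C)
      (fun x y => (x = s ∧ y ∈ B) ∨ (x ∈ C ∧ y ∈ C)) := by
  classical
  -- m ≥ 1 and n ≥ 1
  have hm1 : 1 ≤ m := by
    have : (1 : Cardinal) ≤ (m : Cardinal) := by
      rw [hm]
      exact le_min hB.le (by exact_mod_cast (by omega : 1 ≤ k))
    exact_mod_cast this
  have hn1 : 1 ≤ n := by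
    have : (1 : Cardinal) ≤ (n : Cardinal) := by
      rw [hn]
      exact le_min hCB.le (by exact_mod_cast (by omega : 1 ≤ k))
    exact_mod_cast this
  -- embeddings
  obtain ⟨g0⟩ : Nonempty (ULift.{u_1} (Fin m) ↪ B) := by
    rw [← Cardinal.le_def]
    simp only [Cardinal.mk_uLift, Cardinal.mk_fin, Cardinal.lift_natCast]
    exact hm ▸ min_le_left _ _
  obtain ⟨g0'⟩ : Nonempty (ULift.{u_1} (Fin n) ↪ ↥(C \ B)) := by
    rw [← Cardinal.le_def]
    simp only [Cardinal.mk_uLift, Cardinal.mk_fin, Cardinal.lift_natCast]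
    exact hn ▸ min_le_left _ _
  let g : Fin m ↪ B := (Equiv.ulift.symm.toEmbedding).trans g0
  let g' : Fin n ↪ ↥(C \ B) := (Equiv.ulift.symm.toEmbedding).trans g0'
  have hsB : s ∉ B := fun h => hs (hBC h)
  set f : α → ℤ := fun x =>
    if hx : x ∈ B then (if h : ∃ i, (g i : α) = x then ((h.choose : ℕ) : ℤ) + 1 else 1)
    else if hx : x ∈ C \ B then
      (if h : ∃ i, ((g' i : α)) = x then (m : ℤ) + ((h.choose : ℕ) : ℤ) + 1 else (m : ℤ) + 1)
    else 0 with hf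
  have hfs : f s = 0 := by
    simp only [hf]
    rw [dif_neg hsB, dif_neg (fun h => hs h.1)]
  have hfB : ∀ x ∈ B, 1 ≤ f x ∧ f x ≤ (m : ℤ) := by
    intro x hx
    simp only [hf]
    rw [dif_pos hx]
    split
    · next h =>
      have := (h.choose : Fin m).isLt
      omega
    · omega
  have hfCB : ∀ x ∈ C \ B, (m : ℤ) + 1 ≤ f x ∧ f x ≤ (m : ℤ) + (n : ℤ) := by
    intro x hx
    simp only [hf]
    rw [dif_neg hx.2, dif_pos hx]
    split
    · next h =>
      have := (h.choose : Fin n).isLt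
      omega
    · omega
  have hfC : ∀ x ∈ C, 1 ≤ f x ∧ f x ≤ (m : ℤ) + (n : ℤ) := by
    intro x hx
    by_cases hxB : x ∈ B
    · have := hfB x hxB; omega
    · have := hfCB x ⟨hx, hxB⟩; omega
  -- surjectivity onto [1, m]
  have hsurB : ∀ t : ℤ, 1 ≤ t → t ≤ (m : ℤ) → ∃ b ∈ B, f b = t := by
    intro t ht1 htm
    have h0 : (0 : ℤ) ≤ t - 1 := by omega
    have htn := Int.toNat_of_nonneg h0
    have hlt : (t - 1).toNat < m := by omega
    set i : Fin m := ⟨(t - 1).toNat, hlt⟩ with hi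
    refine ⟨(g i : α), (g i).2, ?_⟩
    simp only [hf]
    rw [dif_pos (g i).2]
    have hex : ∃ j, (g j : α) = (g i : α) := ⟨i, rfl⟩
    rw [dif_pos hex]
    have : g hex.choose = g i := Subtype.ext hex.choose_spec
    have := g.injective this
    rw [this]
    simp only [hi]
    omega
  -- surjectivity onto [m+1, m+n]
  have hsurCB : ∀ t : ℤ, (m : ℤ) + 1 ≤ t → t ≤ (m : ℤ) + (n : ℤ) → ∃ b ∈ C \ B, f b = t := by
    intro t ht1 htm
    have h0 : (0 : ℤ) ≤ t - (m : ℤ) - 1 := by omega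
    have htn := Int.toNat_of_nonneg h0
    have hlt : (t - (m : ℤ) - 1).toNat < n := by omega
    set i : Fin n := ⟨(t - (m : ℤ) - 1).toNat, hlt⟩ with hi
    refine ⟨(g' i : α), (g' i).2, ?_⟩
    simp only [hf]
    rw [dif_neg (g' i).2.2, dif_pos (g' i).2]
    have hex : ∃ j, (g' j : α) = (g' i : α) := ⟨i, rfl⟩
    rw [dif_pos hex]
    have : g' hex.choose = g' i := Subtype.ext hex.choose_spec
    have := g'.injective this
    rw [this]
    simp only [hi]
    omega
  have hnne : ((n : ℤ)) ≠ -1 := by omega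
  have hWmem : ∀ t : ℤ, t ∈ flowerW (m : ℤ) (n : ℤ) ↔ 0 ≤ t ∧ t ≤ (m : ℤ) + (n : ℤ) := by
    intro t
    simp [flowerW, hnne]
  have hRiff : ∀ i j : ℤ, flowerR (m : ℤ) (n : ℤ) i j ↔
      ((i = 0 ∧ 1 ≤ j ∧ j ≤ (m : ℤ)) ∨
        (1 ≤ i ∧ i ≤ (m : ℤ) + (n : ℤ) ∧ 1 ≤ j ∧ j ≤ (m : ℤ) + (n : ℤ))) := by
    intro i j
    simp [flowerR, hnne]
  refine ⟨f, ⟨?_, ?_, ?_⟩, ?_⟩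
  · -- maps W' into W
    intro x hx
    rw [hWmem]
    rcases hx with rfl | hx
    · rw [hfs]; constructor <;> omega
    · have := hfC x hx; omega
  · -- forth
    intro x hx y hy hR
    rw [hRiff]
    rcases hR with ⟨rfl, hyB⟩ | ⟨hxC, hyC⟩
    · left
      exact ⟨hfs, hfB y hyB⟩
    · right
      have h1 := hfC x hxC
      have h2 := hfC y hyC
      exact ⟨h1.1, h1.2, h2.1, h2.2⟩
  · -- back
    intro x hx t ht hR
    rw [hRiff] at hR
    rcases hx with rfl | hxC
    · rcases hR with ⟨_, ht1, htm⟩ | ⟨h1, _⟩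
      · obtain ⟨b, hb, hfb⟩ := hsurB t ht1 htm
        exact ⟨b, Or.inr (hBC hb), Or.inl ⟨rfl, hb⟩, hfb⟩
      · rw [hfs] at h1; omega
    · have hx1 := hfC x hxC
      rcases hR with ⟨h0, _⟩ | ⟨_, _, ht1, htmn⟩
      · omega
      · by_cases htm : t ≤ (m : ℤ)
        · obtain ⟨b, hb, hfb⟩ := hsurB t ht1 htm
          exact ⟨b, Or.inr (hBC hb), Or.inr ⟨hxC, hBC hb⟩, hfb⟩
        · obtain ⟨b, hb, hfb⟩ := hsurCB t (by omega) htmn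
          exact ⟨b, Or.inr hb.1, Or.inr ⟨hxC, hb.1⟩, hfb⟩
  · -- image
    ext t
    rw [hWmem]
    constructor
    · rintro ⟨x, hx, rfl⟩
      rcases hx with rfl | hxC
      · rw [hfs]; constructor <;> omega
      · have := hfC x hxC; omega
    · rintro ⟨ht0, htmn⟩
      by_cases ht0' : t = 0
      · exact ⟨s, Or.inl rfl, ht0' ▸ hfs⟩
      · by_cases htm : t ≤ (m : ℤ)
        · obtain ⟨b, hb, hfb⟩ := hsurB t (by omega) htm
          exact ⟨b, Or.inr (hBC hb), hfb⟩
        · obtain ⟨b, hb, hfb⟩ := hsurCB t (by omega) htmn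
          exact ⟨b, Or.inr hb.1, hfb⟩
end

section
/- Let (W,R) be Euclidean, s ∈ W, and F_m^n a flower with n ∈ ℕ. If there exists a surjective bounded morphism f from the generated subframe (W_s, R_s) to F_m^n such that f(s) generates F_m^n (i.e., f(s) = 0), then W_s = {s} ∪ C and R_s = ({s} × B) ∪ (C × C) for some sets B ⊆ C with s ∉ C, |B| ≥ m, and |C \ B| ≥ n. -/
/-!
In a Euclidean frame every successor `u` of `s` is reflexive and sees all other successors of `s`,
and the successors of `u` stay among them; hence the worlds properly reachable from `s` form a
single cluster `C`, and the generated subframe is `s` pointing into a subset `B` of that cluster.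
The bounded morphism onto the flower then supplies, by the back condition at `s`, a world of `B`
over each of the petals `1, …, m`, and, by surjectivity, a world over each of `m + 1, …, m + n`;
these lie in `C \ B` because `0` sees none of them.
-/

open Cardinal Relation

def IsEuclidean {W : Type*} (R : W → W → Prop) : Prop :=
  ∀ s t u, R s t → R s u → R t u

namespace IsEuclidean

variable {W : Type*} {R : W → W → Prop}

theorem rel_self (hR : IsEuclidean R) {a b : W} (hab : R a b) : R b b :=
  hR a b b hab hab

theorem exists_rel_of_transGen (hR : IsEuclidean R) {s x : W} (hx : TransGen R s x) :
    ∃ u, R s u ∧ R u x := by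
  induction hx with
  | single hsx => exact ⟨_, hsx, hR.rel_self hsx⟩
  | tail _ hxy ih =>
    obtain ⟨u, hsu, hux⟩ := ih
    exact ⟨u, hsu, hR _ _ _ (hR _ _ _ hux (hR.rel_self hsu)) hxy⟩

theorem rel_of_transGen (hR : IsEuclidean R) {s x y : W} (hx : TransGen R s x)
    (hy : TransGen R s y) : R x y := by
  obtain ⟨u, hsu, hux⟩ := hR.exists_rel_of_transGen hx
  obtain ⟨v, hsv, hvy⟩ := hR.exists_rel_of_transGen hy
  have hvx : R v x := hR _ _ _ (hR _ _ _ hsu hsv) hux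
  exact hR _ _ _ hvx hvy

theorem rel_iff (hR : IsEuclidean R) {s x y : W} (hx : ReflTransGen R s x) :
    R x y ↔ (x = s ∧ R s y) ∨ (TransGen R s x ∧ TransGen R s y) := by
  constructor
  · intro hxy
    rcases reflTransGen_iff_eq_or_transGen.1 hx with rfl | hsx
    · exact Or.inl ⟨rfl, hxy⟩
    · exact Or.inr ⟨hsx, hsx.tail hxy⟩
  · rintro (⟨rfl, hsy⟩ | ⟨hsx, hsy⟩)
    · exact hsy
    · exact hR.rel_of_transGen hsx hsy

end IsEuclidean

theorem setOf_reflTransGen_eq_insert {W : Type*} (R : W → W → Prop) (s : W) :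
    {t | ReflTransGen R s t} = insert s {t | TransGen R s t} := by
  ext t
  exact reflTransGen_iff_eq_or_transGen

theorem natCast_le_mk_of_Ioc_subset_image {α : Type*} {f : α → ℤ} {A : Set α} {a : ℤ}
    {k : ℕ} (h : Set.Ioc a (a + k) ⊆ f '' A) : (k : Cardinal) ≤ #A := by
  have hk : #(Set.Ioc a (a + k)) = k := by rw [Cardinal.mk_fintype]; simp
  simpa [hk] using
    (Cardinal.lift_le.2 (Cardinal.mk_le_mk_of_subset h)).trans Cardinal.mk_image_le_lift

section Flower

variable (m n : ℕ)

theorem flowerW_natCast : flowerW m n = Set.Icc 0 ((m : ℤ) + n) := by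
  ext i
  simp [flowerW, Set.mem_Icc]

theorem flowerR_zero_iff (j : ℤ) : flowerR m n 0 j ↔ j ∈ Set.Ioc 0 (m : ℤ) := by
  have hn : (n : ℤ) ≠ -1 := by omega
  simp only [flowerR, if_neg hn, Set.mem_Ioc, true_and]
  omega

end Flower

section BoundedMorphism

variable {W : Type*} {R : W → W → Prop} {s : W} {m n : ℕ} {f : W → ℤ}

theorem Ioc_zero_subset_image_rel
    (hf : IsBoundedMorphism {t | ReflTransGen R s t} R (flowerW m n) (flowerR m n) f)
    (hfs : f s = 0) : Set.Ioc 0 (m : ℤ) ⊆ f '' {t | R s t} := by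
  intro j hj
  have hjW : j ∈ flowerW m n := by
    rw [flowerW_natCast]
    simp only [Set.mem_Ioc, Set.mem_Icc] at hj ⊢
    omega
  obtain ⟨y, -, hsy, rfl⟩ := hf.2.2 s .refl j hjW (by rwa [hfs, flowerR_zero_iff])
  exact ⟨y, hsy, rfl⟩

theorem Ioc_subset_image_transGen_diff_rel
    (hf : IsBoundedMorphism {t | ReflTransGen R s t} R (flowerW m n) (flowerR m n) f)
    (hsurj : f '' {t | ReflTransGen R s t} = flowerW m n) (hfs : f s = 0) :
    Set.Ioc (m : ℤ) (m + n) ⊆ f '' ({t | TransGen R s t} \ {t | R s t}) := by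
  intro j hj
  have hjW : j ∈ flowerW m n := by
    rw [flowerW_natCast]
    simp only [Set.mem_Ioc, Set.mem_Icc] at hj ⊢
    omega
  rw [← hsurj] at hjW
  obtain ⟨y, hy, rfl⟩ := hjW
  refine ⟨y, ⟨(reflTransGen_iff_eq_or_transGen.1 hy).resolve_left fun hys => ?_,
    fun hsy => ?_⟩, rfl⟩
  · rw [Set.mem_Ioc, hys, hfs] at hj
    omega
  · have h0y := hf.2.1 s .refl y hy hsy
    rw [hfs, flowerR_zero_iff, Set.mem_Ioc] at h0y
    rw [Set.mem_Ioc] at hj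
    omega

end BoundedMorphism

theorem stmt11_general {W : Type*} (R : W → W → Prop)
    (heucl : ∀ s t u : W, R s t → R s u → R t u ∧ R u t)
    (s : W) (m n : ℕ) (f : W → ℤ)
    (hf : IsBoundedMorphism {t | Relation.ReflTransGen R s t} R
      (flowerW (m : ℤ) (n : ℤ)) (flowerR (m : ℤ) (n : ℤ)) f)
    (hsurj : f '' {t | Relation.ReflTransGen R s t} = flowerW (m : ℤ) (n : ℤ))
    (hfs : f s = 0) :
    ∃ B C : Set W, B ⊆ C ∧ s ∉ C ∧
      {t | Relation.ReflTransGen R s t} = insert s C ∧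
      (∀ x ∈ {t | Relation.ReflTransGen R s t}, ∀ y ∈ {t | Relation.ReflTransGen R s t},
        (R x y ↔ (x = s ∧ y ∈ B) ∨ (x ∈ C ∧ y ∈ C))) ∧
      (m : Cardinal) ≤ Cardinal.mk B ∧ (n : Cardinal) ≤ Cardinal.mk ↥(C \ B) := by
  have hR : IsEuclidean R := fun a b c hab hac => (heucl a b c hab hac).1
  refine ⟨{t | R s t}, {t | TransGen R s t}, fun _ => TransGen.single, fun hss => ?_,
    setOf_reflTransGen_eq_insert R s, fun x hx _ _ => hR.rel_iff hx, ?_,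
    natCast_le_mk_of_Ioc_subset_image (Ioc_subset_image_transGen_diff_rel hf hsurj hfs)⟩
  · have h00 := hf.2.1 s .refl s .refl (hR.rel_of_transGen hss hss)
    rw [hfs, flowerR_zero_iff] at h00
    exact lt_irrefl 0 h00.1
  · exact natCast_le_mk_of_Ioc_subset_image (a := 0)
      (by simpa using Ioc_zero_subset_image_rel hf hfs)

/-- If (W,R) is Euclidean, n ∈ ℕ, and there is a surjective bounded
morphism f from the subframe generated by s onto the flower F_m^n with f(s) = 0,
then W_s = {s} ∪ C, R_s = ({s} × B) ∪ (C × C) with B ⊆ C, s ∉ C, |B| ≥ m, |C \ B| ≥ n. -/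
theorem stmt11 {W : Type*} [Nonempty W] (R : W → W → Prop)
    (heucl : ∀ s t u : W, R s t → R s u → R t u ∧ R u t)
    (s : W) (m n : ℕ) (hm : 1 ≤ m) (f : W → ℤ)
    (hf : IsBoundedMorphism {t | Relation.ReflTransGen R s t} R
      (flowerW (m : ℤ) (n : ℤ)) (flowerR (m : ℤ) (n : ℤ)) f)
    (hsurj : f '' {t | Relation.ReflTransGen R s t} = flowerW (m : ℤ) (n : ℤ))
    (hfs : f s = 0) :
    ∃ B C : Set W, B ⊆ C ∧ s ∉ C ∧
      {t | Relation.ReflTransGen R s t} = insert s C ∧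
      (∀ x ∈ {t | Relation.ReflTransGen R s t}, ∀ y ∈ {t | Relation.ReflTransGen R s t},
        (R x y ↔ (x = s ∧ y ∈ B) ∨ (x ∈ C ∧ y ∈ C))) ∧
      (m : Cardinal) ≤ Cardinal.mk B ∧ (n : Cardinal) ≤ Cardinal.mk ↥(C \ B) :=
  stmt11_general R heucl s m n f hf hsurj hfs
end

section
/- Every Euclidean frame is the disjoint union of a family of galaxies; that is, for any Euclidean frame (W,R) there is a partition of W into sets W_i such that each restriction (W_i, R ∩ (W_i × W_i)) is a galaxy, R = ⋃_i R ∩ (W_i × W_i), and no R-edge crosses between distinct parts. -/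
lemma stmt12_key {W : Type} (R : W → W → Prop)
    (heucl : ∀ s t u : W, R s t → R s u → R t u ∧ R u t) :
    ∀ x y, Relation.EqvGen R x y →
      ((∃ t, R x t) ↔ (∃ t, R y t)) ∧ (∀ t u, R x t → R y u → R t u) := by
  intro x y h
  induction h with
  | rel x y hxy =>
    refine ⟨⟨fun _ => ⟨y, (heucl x y y hxy hxy).1⟩, fun _ => ⟨y, hxy⟩⟩, ?_⟩
    intro t u hxt hyu
    exact (heucl y t u (heucl x y t hxy hxt).1 hyu).1
  | refl x =>
    exact ⟨Iff.rfl, fun t u hxt hxu => (heucl x t u hxt hxu).1⟩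
  | symm x y _ ih =>
    refine ⟨ih.1.symm, ?_⟩
    intro t u hyt hxu
    have hut : R u t := ih.2 u t hxu hyt
    have huu : R u u := (heucl x u u hxu hxu).1
    exact (heucl u t u hut huu).1
  | trans x y z hxy hyz ih1 ih2 =>
    refine ⟨ih1.1.trans ih2.1, ?_⟩
    intro t u hxt hzu
    obtain ⟨v, hyv⟩ := ih1.1.mp ⟨t, hxt⟩
    have htv : R t v := ih1.2 t v hxt hyv
    have hvu : R v u := ih2.2 v u hyv hzu
    have htt : R t t := (heucl x t t hxt hxt).1
    have hvt : R v t := (heucl t t v htt htv).2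
    exact (heucl v t u hvt hvu).1

/-- Every Euclidean frame is the disjoint union of a family of galaxies. -/
theorem stmt12 {W : Type} [Nonempty W] (R : W → W → Prop)
    (heucl : ∀ s t u : W, R s t → R s u → R t u ∧ R u t) :
    ∃ (ι : Type) (Wi : ι → Set W),
      (∀ i j, i ≠ j → Disjoint (Wi i) (Wi j)) ∧
      (⋃ i, Wi i) = Set.univ ∧
      (∀ x y, R x y → ∃ i, x ∈ Wi i ∧ y ∈ Wi i) ∧
      (∀ i, ∃ (A B : Set W) (ρ : W → Set W),
        Disjoint A B ∧ A ∪ B = Wi i ∧ (Wi i).Nonempty ∧ (∀ a ∈ A, ρ a ⊆ B) ∧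
        ∀ x ∈ Wi i, ∀ y ∈ Wi i,
          (R x y ↔ (x ∈ A ∧ y ∈ ρ x) ∨ (x ∈ B ∧ y ∈ B))) := by
  classical
  let S : Setoid W := Relation.EqvGen.setoid R
  refine ⟨Quotient S, fun i => {w | Quotient.mk S w = i}, ?_, ?_, ?_, ?_⟩
  · intro i j hij
    refine Set.disjoint_left.mpr ?_
    intro w hwi hwj
    exact hij (hwi ▸ hwj ▸ rfl)
  · ext w
    simp only [Set.mem_iUnion, Set.mem_univ, iff_true]
    exact ⟨Quotient.mk S w, rfl⟩
  · intro x y hxy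
    refine ⟨Quotient.mk S x, rfl, ?_⟩
    exact (Quotient.sound (Relation.EqvGen.symm _ _ (Relation.EqvGen.rel x y hxy)) : Quotient.mk S y = Quotient.mk S x)
  · intro i
    obtain ⟨w, hw⟩ := Quotient.exists_rep i
    set Wi : Set W := {w | Quotient.mk S w = i} with hWi
    set Bg : Set W := {t | ∃ s, R s t} with hBg
    refine ⟨Wi \ Bg, Wi ∩ Bg, fun x => {y | R x y}, ?_, ?_, ⟨w, hw⟩, ?_, ?_⟩
    · exact Set.disjoint_left.mpr fun a ha hb => ha.2 hb.2
    · exact Set.diff_union_inter Wi Bg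
    · intro a ha y hay
      refine ⟨?_, ⟨a, hay⟩⟩
      have : Quotient.mk S y = Quotient.mk S a := Quotient.sound (Relation.EqvGen.symm _ _ (Relation.EqvGen.rel a y hay))
      exact this.trans ha.1
    · intro x hx y hy
      constructor
      · intro hxy
        by_cases hxB : x ∈ Bg
        · exact Or.inr ⟨⟨hx, hxB⟩, ⟨hy, ⟨x, hxy⟩⟩⟩
        · exact Or.inl ⟨⟨hx, hxB⟩, hxy⟩
      · rintro (⟨_, hxy⟩ | ⟨⟨_, ⟨s, hsx⟩⟩, ⟨_, ⟨s', hs'y⟩⟩⟩)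
        · exact hxy
        · have hxy' : Relation.EqvGen R x y := Quotient.exact ((hx.trans hy.symm) : Quotient.mk S x = Quotient.mk S y)
          have hss' : Relation.EqvGen R s s' :=
            Relation.EqvGen.trans _ _ _ (Relation.EqvGen.rel s x hsx)
              (Relation.EqvGen.trans _ _ _ hxy' (Relation.EqvGen.symm _ _ (Relation.EqvGen.rel s' y hs'y)))
          exact (stmt12_key R heucl s s' hss').2 x y hsx hs'y
end

section
/- In any Euclidean frame (W,R), for all worlds s and any valuation V: [U]φ (defined as φ ∧ □□φ) is satisfied at s if and only if φ is satisfied at every world t in the subframe W_s generated by s. -/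
/-- Modal formulas. -/
inductive MForm : Type
  | var : ℕ → MForm
  | bot : MForm
  | neg : MForm → MForm
  | or : MForm → MForm → MForm
  | box : MForm → MForm

/-- Kripke satisfaction of a modal formula at a point of a frame (W,R). -/
def MSat {W : Type*} (R : W → W → Prop) (V : ℕ → Set W) : W → MForm → Prop
  | s, MForm.var p => s ∈ V p
  | _, MForm.bot => False
  | s, MForm.neg φ => ¬ MSat R V s φ
  | s, MForm.or φ ψ => MSat R V s φ ∨ MSat R V s ψ
  | s, MForm.box φ => ∀ t, R s t → MSat R V t φ

/-- In a Euclidean frame, [U]φ (i.e. φ ∧ □□φ) is satisfied at s iff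
φ is satisfied at every world of the subframe generated by s. -/
theorem stmt18 {W : Type*} [Nonempty W] (R : W → W → Prop)
    (heucl : ∀ s t u : W, R s t → R s u → R t u ∧ R u t)
    (V : ℕ → Set W) (s : W) (φ : MForm) :
    (MSat R V s φ ∧ MSat R V s (MForm.box (MForm.box φ))) ↔
      ∀ t, Relation.ReflTransGen R s t → MSat R V t φ := by
  have key : ∀ t, Relation.ReflTransGen R s t → t = s ∨ ∃ u, R s u ∧ R u t := by
    intro t ht
    induction ht with
    | refl => exact Or.inl rfl
    | tail hb hbc ih =>
      rename_i b c
      rcases ih with rfl | ⟨u, hsu, hub⟩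
      · exact Or.inr ⟨c, hbc, (heucl _ _ _ hbc hbc).1⟩
      · have huu : R u u := (heucl _ _ _ hsu hsu).1
        have hbu : R b u := (heucl _ _ _ huu hub).2
        exact Or.inr ⟨u, hsu, (heucl _ _ _ hbu hbc).1⟩
  constructor
  · rintro ⟨hφ, hbb⟩ t ht
    rcases key t ht with rfl | ⟨u, hsu, hut⟩
    · exact hφ
    · exact hbb u hsu t hut
  · intro h
    refine ⟨h s Relation.ReflTransGen.refl, ?_⟩
    intro t hst u htu
    exact h u ((Relation.ReflTransGen.single hst).tail htu)
end

section
/- Suppose W = {s} ∪ C, R = ({s} × B) ∪ (C × C), W' = {s'} ∪ C', R' = ({s'} × B') ∪ (C' × C'), where B ⊆ C, s ∉ C, B' ⊆ C', s' ∉ C', with B ≠ ∅ or C = ∅, and B' ≠ ∅ or C' = ∅; and suppose either (|B'| ≤ q and |B'| = |B|) or (|B'| > q and |B| = q), and either (|C' \ B'| ≤ q and |C' \ B'| = |C \ B|) or (|C' \ B'| > q and |C \ B| = q), for some q ≥ 3. Then (W,R) is a bounded morphic image of (W',R'). -/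
/-- If `|A| ≤ |A'|` and `A'` is empty whenever `A` is, there is a map whose
image of `A'` is exactly `A`. -/
lemma exists_surj_on {α β : Type u} [Nonempty β] {A' : Set α} {A : Set β}
    (hle : Cardinal.mk A ≤ Cardinal.mk A') (hemp : A = ∅ → A' = ∅) :
    ∃ g : α → β, g '' A' = A := by
  classical
  rcases A.eq_empty_or_nonempty with hA | hA
  · exact ⟨fun _ => Classical.arbitrary β, by rw [hemp hA, hA, Set.image_empty]⟩
  · have hne : Nonempty ↥A := hA.to_subtype
    obtain ⟨e⟩ := hle
    refine ⟨fun x => if h : x ∈ A' then ((Function.invFun e ⟨x, h⟩ : ↥A) : β)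
      else Classical.arbitrary β, ?_⟩
    ext t
    constructor
    · rintro ⟨x, hx, rfl⟩
      simp only [dif_pos hx]
      exact (Function.invFun e ⟨x, hx⟩).2
    · intro ht
      obtain ⟨x', hx'⟩ := Function.invFun_surjective e.injective ⟨t, ht⟩
      refine ⟨x', x'.2, ?_⟩
      simp only [dif_pos x'.2, Subtype.coe_eta, hx']

/-- W = {s} ∪ C, R = ({s} × B) ∪ (C × C), W' = {s'} ∪ C',
R' = ({s'} × B') ∪ (C' × C'), under the stated cardinality conditions (q ≥ 3),
(W,R) is a bounded morphic image of (W',R'). -/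
theorem stmt19 {α β : Type u} (q : ℕ) (hq : 3 ≤ q)
    (s : β) (B C : Set β) (hBC : B ⊆ C) (hs : s ∉ C) (hB : B.Nonempty ∨ C = ∅)
    (s' : α) (B' C' : Set α) (hBC' : B' ⊆ C') (hs' : s' ∉ C') (hB' : B'.Nonempty ∨ C' = ∅)
    (h1 : (Cardinal.mk B' ≤ (q : Cardinal) ∧ Cardinal.mk B' = Cardinal.mk B) ∨
          ((q : Cardinal) < Cardinal.mk B' ∧ Cardinal.mk B = (q : Cardinal)))
    (h2 : (Cardinal.mk ↥(C' \ B') ≤ (q : Cardinal) ∧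
            Cardinal.mk ↥(C' \ B') = Cardinal.mk ↥(C \ B)) ∨
          ((q : Cardinal) < Cardinal.mk ↥(C' \ B') ∧
            Cardinal.mk ↥(C \ B) = (q : Cardinal))) :
    IsBMImage (insert s C) (fun x y => (x = s ∧ y ∈ B) ∨ (x ∈ C ∧ y ∈ C))
      (insert s' C') (fun x y => (x = s' ∧ y ∈ B') ∨ (x ∈ C' ∧ y ∈ C')) := by
  classical
  have hqne : (q : Cardinal) ≠ 0 := by
    simp only [ne_eq, Nat.cast_eq_zero]
    omega
  have : Nonempty β := ⟨s⟩
  -- surjection data for B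
  have hBdata : ∃ g : α → β, g '' B' = B := by
    rcases h1 with ⟨_, heq⟩ | ⟨hlt, heq⟩
    · refine exists_surj_on heq.ge ?_
      intro h
      rw [← Set.isEmpty_coe_sort, ← Cardinal.mk_eq_zero_iff, heq,
        Cardinal.mk_eq_zero_iff, Set.isEmpty_coe_sort, h]
    · refine exists_surj_on (heq ▸ hlt.le) ?_
      intro h
      exfalso
      apply hqne
      rw [← heq, Cardinal.mk_eq_zero_iff, Set.isEmpty_coe_sort]
      exact h
  have hCdata : ∃ g : α → β, g '' (C' \ B') = C \ B := by
    rcases h2 with ⟨_, heq⟩ | ⟨hlt, heq⟩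
    · refine exists_surj_on heq.ge ?_
      intro h
      rw [← Set.isEmpty_coe_sort, ← Cardinal.mk_eq_zero_iff, heq,
        Cardinal.mk_eq_zero_iff, Set.isEmpty_coe_sort, h]
    · refine exists_surj_on (heq ▸ hlt.le) ?_
      intro h
      exfalso
      apply hqne
      rw [← heq, Cardinal.mk_eq_zero_iff, Set.isEmpty_coe_sort]
      exact h
  obtain ⟨gB, hgB⟩ := hBdata
  obtain ⟨gC, hgC⟩ := hCdata
  set f : α → β := fun x => if x ∈ B' then gB x else if x ∈ C' then gC x else s with hf
  -- basic properties of f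
  have hfs' : f s' = s := by
    simp only [hf, if_neg (fun h => hs' (hBC' h)), if_neg hs']
  have hfB' : ∀ x ∈ B', f x ∈ B := by
    intro x hx
    simp only [hf, if_pos hx]
    exact hgB ▸ Set.mem_image_of_mem gB hx
  have hfC' : ∀ x ∈ C', f x ∈ C := by
    intro x hx
    by_cases hxB : x ∈ B'
    · exact hBC (hfB' x hxB)
    · have : gC x ∈ C \ B := hgC ▸ Set.mem_image_of_mem gC ⟨hx, hxB⟩
      simp only [hf, if_neg hxB, if_pos hx]
      exact this.1
  have surB : ∀ t ∈ B, ∃ x ∈ B', f x = t := by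
    intro t ht
    obtain ⟨x, hx, hxe⟩ := hgB ▸ ht
    exact ⟨x, hx, by simp only [hf, if_pos hx]; exact hxe⟩
  have surC : ∀ t ∈ C, ∃ x ∈ C', f x = t := by
    intro t ht
    by_cases htB : t ∈ B
    · obtain ⟨x, hx, hxe⟩ := surB t htB
      exact ⟨x, hBC' hx, hxe⟩
    · have hmem : t ∈ gC '' (C' \ B') := by rw [hgC]; exact ⟨ht, htB⟩
      obtain ⟨x, hx, hxe⟩ := hmem
      refine ⟨x, hx.1, ?_⟩
      simp only [hf, if_neg hx.2, if_pos hx.1]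
      exact hxe
  refine ⟨f, ⟨?_, ?_, ?_⟩, ?_⟩
  · -- maps W' into W
    rintro x (rfl | hx)
    · rw [hfs']; exact Set.mem_insert s C
    · exact Set.mem_insert_of_mem s (hfC' x hx)
  · -- forward condition
    rintro x hx y hy (⟨rfl, hyB⟩ | ⟨hxC, hyC⟩)
    · exact Or.inl ⟨hfs', hfB' y hyB⟩
    · exact Or.inr ⟨hfC' x hxC, hfC' y hyC⟩
  · -- back condition
    rintro x hx t ht (⟨hfx, htB⟩ | ⟨hfxC, htC⟩)
    · have hxs : x = s' := by
        rcases hx with rfl | hxC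
        · rfl
        · exact absurd (hfx ▸ hfC' x hxC) hs
      obtain ⟨y, hyB, hye⟩ := surB t htB
      exact ⟨y, Set.mem_insert_of_mem s' (hBC' hyB), Or.inl ⟨hxs, hyB⟩, hye⟩
    · have hxC : x ∈ C' := by
        rcases hx with rfl | hxC
        · exact absurd (hfs' ▸ hfxC) hs
        · exact hxC
      obtain ⟨y, hyC, hye⟩ := surC t htC
      exact ⟨y, Set.mem_insert_of_mem s' hyC, Or.inr ⟨hxC, hyC⟩, hye⟩
  · -- image equals W
    ext t
    constructor
    · rintro ⟨x, (rfl | hxC), rfl⟩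
      · rw [hfs']; exact Set.mem_insert s C
      · exact Set.mem_insert_of_mem s (hfC' x hxC)
    · rintro (rfl | htC)
      · exact ⟨s', Set.mem_insert s' C', hfs'⟩
      · obtain ⟨x, hxC, hxe⟩ := surC t htC
        exact ⟨x, Set.mem_insert_of_mem s' hxC, hxe⟩
end
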